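/- arXiv:1702.05393 — 4 statements merged into one kernel-verified Lean document; each statement's English description precedes it below -/
import Mathlib

section
/- Let G: R^n → Set(R^n) be positively homogeneous in the sense that G(αx) = α·G(x) (elementwise scaling) for all α ≥ 0 and x ∈ R^n, and let S, T be PC-sets in R^n with λ ≥ 0. Suppose that for every boundary point x̄ ∈ ∂S, G(x̄) ⊆ λT. Then for every x ∈ S, G(x) ⊆ λ·ψ_S(x)·T, and hence for every subset X ⊆ S, the union ⋃_{x∈X} G(x) ⊆ λ·Ψ_S(X)·T. -/
open Pointwise
open Topology

noncomputable def gaugeFn {n : ℕ} (S : Set (Fin n → ℝ)) (x : Fin n → ℝ) : ℝ :=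
  sInf {γ : ℝ | 0 ≤ γ ∧ x ∈ γ • S}

noncomputable def setGauge {n : ℕ} (S X : Set (Fin n → ℝ)) : ℝ :=
  sInf {γ : ℝ | 0 ≤ γ ∧ X ⊆ γ • S}

def IsPCSet {n : ℕ} (S : Set (Fin n → ℝ)) : Prop :=
  IsCompact S ∧ Convex ℝ S ∧ (0 : Fin n → ℝ) ∈ interior S

def IsKInf (f : ℝ → ℝ) : Prop :=
  ContinuousOn f (Set.Ici 0) ∧ StrictMonoOn f (Set.Ici 0) ∧ f 0 = 0 ∧
    (∀ x, 0 ≤ x → 0 ≤ f x) ∧ Filter.Tendsto f Filter.atTop Filter.atTop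

lemma gaugeFn_eq_gauge {n : ℕ} {S : Set (Fin n → ℝ)} (h0 : (0 : Fin n → ℝ) ∈ S)
    (x : Fin n → ℝ) : gaugeFn S x = gauge S x := by
  rcases eq_or_ne x 0 with rfl | hx
  · rw [gauge_zero]
    have hmem : (0:ℝ) ∈ {γ : ℝ | 0 ≤ γ ∧ (0 : Fin n → ℝ) ∈ γ • S} := by
      refine ⟨le_rfl, ?_⟩
      rw [Set.zero_smul_set ⟨0, h0⟩]; exact Set.mem_singleton _
    exact le_antisymm (csInf_le ⟨0, fun y hy => hy.1⟩ hmem)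
      (le_csInf ⟨0, hmem⟩ fun y hy => hy.1)
  · unfold gaugeFn gauge
    congr 1
    ext γ
    constructor
    · rintro ⟨hγ, hm⟩
      rcases hγ.lt_or_eq with h | rfl
      · exact ⟨h, hm⟩
      · rw [Set.zero_smul_set ⟨0, h0⟩] at hm
        exact absurd hm hx
    · rintro ⟨hγ, hm⟩; exact ⟨hγ.le, hm⟩

lemma smul_set_mono_of_convex {n : ℕ} {T : Set (Fin n → ℝ)} (hT : Convex ℝ T)
    (h0 : (0 : Fin n → ℝ) ∈ T) {c d : ℝ} (hc : 0 ≤ c) (hcd : c ≤ d) :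
    c • T ⊆ d • T := by
  rintro _ ⟨t, ht, rfl⟩
  rcases (hc.trans hcd).lt_or_eq with hd | hd
  · refine ⟨(c / d) • t, ?_, show d • ((c/d) • t) = c • t by
      rw [smul_smul, mul_div_cancel₀ _ hd.ne']⟩
    have := hT h0 ht (sub_nonneg.mpr ((div_le_one hd).mpr hcd))
      (div_nonneg hc hd.le) (by ring)
    simpa using this
  · subst hd
    have : c = 0 := le_antisymm hcd hc
    subst this
    exact ⟨t, ht, rfl⟩

/-- positively homogeneous set-valued maps contracting the boundary
contract every point and every subset proportionally to the (set-)gauge. -/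
theorem homogeneous_boundary_contraction {n : ℕ}
    (G : (Fin n → ℝ) → Set (Fin n → ℝ))
    (hG : ∀ α : ℝ, 0 ≤ α → ∀ x : Fin n → ℝ, G (α • x) = α • G x)
    (S T : Set (Fin n → ℝ)) (hS : IsPCSet S) (hT : IsPCSet T)
    (lam : ℝ) (hlam : 0 ≤ lam)
    (hfront : ∀ x ∈ frontier S, G x ⊆ lam • T) :
    (∀ x ∈ S, G x ⊆ (lam * gaugeFn S x) • T) ∧
    ∀ X ⊆ S, (⋃ x ∈ X, G x) ⊆ (lam * sSup (gaugeFn S '' X)) • T := by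
  obtain ⟨hScpt, hSconv, hS0⟩ := hS
  obtain ⟨hTcpt, hTconv, hT0⟩ := hT
  have hS0' : (0 : Fin n → ℝ) ∈ S := interior_subset hS0
  have hT0' : (0 : Fin n → ℝ) ∈ T := interior_subset hT0
  have hSnhds : S ∈ 𝓝 (0 : Fin n → ℝ) := mem_interior_iff_mem_nhds.mp hS0
  have hSabs : Absorbent ℝ S := absorbent_nhds_zero hSnhds
  have hSbdd : Bornology.IsVonNBounded ℝ S := hScpt.totallyBounded.isVonNBounded ℝ
  have key : ∀ x ∈ S, G x ⊆ (lam * gaugeFn S x) • T := by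
    intro x hx
    rw [gaugeFn_eq_gauge hS0']
    set a := gauge S x with ha
    have ha0 : 0 ≤ a := gauge_nonneg x
    rcases ha0.lt_or_eq with hpos | hzero
    · -- a > 0 : rescale to the frontier
      set xb := a⁻¹ • x with hxb
      have hgb : gauge S xb = 1 := by
        rw [hxb, gauge_smul_of_nonneg (inv_nonneg.mpr ha0), smul_eq_mul, ← ha,
          inv_mul_cancel₀ hpos.ne']
      have hfr : xb ∈ frontier S :=
        (gauge_eq_one_iff_mem_frontier hSconv hSnhds).mp hgb
      have hxeq : x = a • xb := by
        rw [hxb, smul_inv_smul₀ hpos.ne']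
      calc G x = a • G xb := by rw [hxeq, hG a ha0]
        _ ⊆ a • (lam • T) := Set.smul_set_mono (hfront xb hfr)
        _ = (lam * a) • T := by rw [smul_smul, mul_comm]
    · -- a = 0 : x = 0
      have hx0 : x = 0 := (gauge_eq_zero hSabs hSbdd).mp hzero.symm
      subst hx0
      intro y hy
      have h0 : G 0 = (0 : ℝ) • G 0 := by
        rw [← hG 0 le_rfl 0, smul_zero]
      rw [h0] at hy
      obtain ⟨z, _, rfl⟩ := hy
      exact ⟨0, hT0', by simp⟩
  refine ⟨key, fun X hX => ?_⟩
  intro y hy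
  obtain ⟨x, hxX, hyx⟩ := Set.mem_iUnion₂.mp hy
  have hxS : x ∈ S := hX hxX
  have hbdd : BddAbove (gaugeFn S '' X) := by
    refine ⟨1, ?_⟩
    rintro _ ⟨z, hz, rfl⟩
    rw [gaugeFn_eq_gauge hS0']
    exact gauge_le_one_of_mem (hX hz)
  have hle : gaugeFn S x ≤ sSup (gaugeFn S '' X) :=
    le_csSup hbdd ⟨x, hxX, rfl⟩
  have hg0 : 0 ≤ gaugeFn S x := by
    rw [gaugeFn_eq_gauge hS0']; exact gauge_nonneg x
  exact smul_set_mono_of_convex hTconv hT0'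
    (mul_nonneg hlam hg0) (mul_le_mul_of_nonneg_left hle hlam)
    (key x hxS hyx)
end

section
/- Let M ≥ 1 be an integer and λ ∈ [0,1). For each i ∈ {0,...,M−1} let Ψ_i: C → R_+ be functions on a set C, let G_k: C → C for k ∈ N, write σ(k) = k mod M, and suppose for all k ∈ N and X ∈ C: Ψ_{σ(k+1)}(G_k(X)) ≤ Ψ_{σ(k)}(X) when σ(k) ∈ {0,...,M−2}, and Ψ_{σ(k+1)}(G_k(X)) ≤ λ·Ψ_{σ(k)}(X) when σ(k) = M−1. Then the function W(k,X) = (M + (λ−1)σ(k))·Ψ_{σ(k)}(X) satisfies W(k+1, G_k(X)) ≤ ρ·W(k,X) for all k, X, where ρ = max{(M+λ−1)/M, λM/(λ(M−1)+1)} ∈ [0,1). -/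
/-- a periodic M-step λ-contraction of the family Ψ_i yields a uniform
one-step ρ-contraction of the weighted function W(k,X) = (M+(λ-1)σ(k))Ψ_{σ(k)}(X). -/
theorem periodic_lyapunov_contraction {C : Type*} (M : ℕ) (hM : 1 ≤ M)
    (lam : ℝ) (hl0 : 0 ≤ lam) (hl1 : lam < 1)
    (Psi : ℕ → C → ℝ) (hpos : ∀ i X, 0 ≤ Psi i X)
    (G : ℕ → C → C)
    (hstep : ∀ k X, k % M ≠ M - 1 → Psi ((k + 1) % M) (G k X) ≤ Psi (k % M) X)
    (hlast : ∀ k X, k % M = M - 1 → Psi ((k + 1) % M) (G k X) ≤ lam * Psi (k % M) X) :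
    (0 ≤ max (((M : ℝ) + lam - 1) / M) (lam * M / (lam * ((M : ℝ) - 1) + 1)) ∧
      max (((M : ℝ) + lam - 1) / M) (lam * M / (lam * ((M : ℝ) - 1) + 1)) < 1) ∧
    ∀ k X,
      ((M : ℝ) + (lam - 1) * (((k + 1) % M : ℕ) : ℝ)) * Psi ((k + 1) % M) (G k X) ≤
        max (((M : ℝ) + lam - 1) / M) (lam * M / (lam * ((M : ℝ) - 1) + 1)) *
          (((M : ℝ) + (lam - 1) * ((k % M : ℕ) : ℝ)) * Psi (k % M) X) := by
  have hM1 : (1:ℝ) ≤ (M:ℝ) := by exact_mod_cast hM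
  set ρ := max (((M : ℝ) + lam - 1) / M) (lam * M / (lam * ((M : ℝ) - 1) + 1)) with hρdef
  have hMpos : (0:ℝ) < M := by linarith
  have hD : (0:ℝ) < lam * ((M:ℝ) - 1) + 1 := by nlinarith
  have hρa : ((M : ℝ) + lam - 1) / M ≤ ρ := le_max_left _ _
  have hρb : lam * M / (lam * ((M : ℝ) - 1) + 1) ≤ ρ := le_max_right _ _
  have hρ1 : ρ < 1 := by
    apply max_lt
    · rw [div_lt_one hMpos]; linarith
    · rw [div_lt_one hD]; nlinarith
  have hρ0 : 0 ≤ ρ :=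
    le_trans (div_nonneg (by linarith) hMpos.le) hρa
  have hA : (M:ℝ) + lam - 1 ≤ ρ * M := (div_le_iff₀ hMpos).mp hρa
  have hB : lam * M ≤ ρ * (lam * ((M:ℝ) - 1) + 1) := (div_le_iff₀ hD).mp hρb
  refine ⟨⟨hρ0, hρ1⟩, fun k X => ?_⟩
  have hsM : k % M < M := Nat.mod_lt _ hM
  by_cases h : k % M = M - 1
  · have hq : M * (k / M) + (M - 1) = k := by rw [← h]; exact Nat.div_add_mod k M
    have hk1 : k + 1 = M * (k / M) + M := by
      calc k + 1 = M * (k / M) + (M - 1) + 1 := by rw [hq]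
        _ = M * (k / M) + M := by omega
    have h1 : (k + 1) % M = 0 := by
      rw [hk1, Nat.add_mod_right, Nat.mul_mod_right]
    have hcast : ((k % M : ℕ) : ℝ) = (M:ℝ) - 1 := by
      rw [h]; push_cast [Nat.cast_sub hM]; ring
    have hl := hlast k X h
    rw [h1] at hl ⊢
    rw [hcast]
    push_cast
    have hP := hpos (k % M) X
    have e : (M:ℝ) + (lam - 1) * ((M:ℝ) - 1) = lam * ((M:ℝ) - 1) + 1 := by ring
    rw [e]
    have h2 := mul_le_mul_of_nonneg_right hB hP
    calc ((M:ℝ) + (lam - 1) * 0) * Psi 0 (G k X)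
        = (M:ℝ) * Psi 0 (G k X) := by ring
      _ ≤ (M:ℝ) * (lam * Psi (k % M) X) := mul_le_mul_of_nonneg_left hl hMpos.le
      _ = lam * M * Psi (k % M) X := by ring
      _ ≤ ρ * (lam * ((M:ℝ) - 1) + 1) * Psi (k % M) X := h2
      _ = ρ * ((lam * ((M:ℝ) - 1) + 1) * Psi (k % M) X) := by ring
  · have hM2 : 2 ≤ M := by omega
    have hlt : k % M + 1 < M := by omega
    have h1 : (k + 1) % M = k % M + 1 := by
      rw [Nat.add_mod, Nat.mod_eq_of_lt (by omega : 1 < M), Nat.mod_eq_of_lt hlt]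
    have hs1 : k % M + 1 ≤ M - 1 := by omega
    have hs1' : ((k % M : ℕ) : ℝ) + 1 ≤ (M:ℝ) - 1 := by
      have : ((k % M + 1 : ℕ) : ℝ) ≤ ((M - 1 : ℕ) : ℝ) := by exact_mod_cast hs1
      push_cast [Nat.cast_sub hM] at this
      linarith
    have hst := hstep k X h
    rw [h1] at hst ⊢
    push_cast
    set s : ℝ := ((k % M : ℕ) : ℝ) with hsdef
    have hs0 : 0 ≤ s := by positivity
    have ha : 0 < (M:ℝ) + (lam - 1) * (s + 1) := by nlinarith
    have hb : 0 < (M:ℝ) + (lam - 1) * s := by nlinarith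
    have hwt : (M:ℝ) + (lam - 1) * (s + 1) ≤ ρ * ((M:ℝ) + (lam - 1) * s) := by
      have h2 : ((M:ℝ) + (lam - 1) * (s + 1)) * M ≤ ((M:ℝ) + lam - 1) * ((M:ℝ) + (lam - 1) * s) := by
        nlinarith [mul_nonneg (sq_nonneg (lam - 1)) hs0]
      have h3 : ((M:ℝ) + lam - 1) * ((M:ℝ) + (lam - 1) * s) ≤ ρ * M * ((M:ℝ) + (lam - 1) * s) := by
        nlinarith
      nlinarith
    calc ((M:ℝ) + (lam - 1) * (s + 1)) * Psi (k % M + 1) (G k X)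
        ≤ ((M:ℝ) + (lam - 1) * (s + 1)) * Psi (k % M) X :=
          mul_le_mul_of_nonneg_left hst ha.le
      _ ≤ ρ * ((M:ℝ) + (lam - 1) * s) * Psi (k % M) X :=
          mul_le_mul_of_nonneg_right hwt (hpos (k % M) X)
      _ = ρ * (((M:ℝ) + (lam - 1) * s) * Psi (k % M) X) := by ring
end

section
/- Let A: Θ → R^{n×n} be affine in θ, B ∈ R^{n×m}, let Θ = conv{θ̄^1,...,θ̄^q} be a polytope, and let X = conv{x̄^1,...,x̄^t}, Y ⊆ R^n with Y convex. Suppose for every j ∈ {1,...,t} and l ∈ {1,...,q} there are controls u^{(j,l)} ∈ U (U convex) with A(θ̄^l)x̄^j + B u^{(j,l)} ∈ Y. Define the vertex-control law Π(x,θ) = Σ_j ζ_j Σ_l η_l u^{(j,l)} where ζ, η are convex multipliers expressing x = Σ_j ζ_j x̄^j and θ = Σ_l η_l θ̄^l. Then for all x ∈ X and θ ∈ Θ, Π(x,θ) ∈ U and A(θ)x + B Π(x,θ) ∈ Y. -/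
/-!
Since `θ ↦ A θ` is affine and `(M, x) ↦ M *ᵥ x` is bilinear, the closed-loop successor
`A θ x + B Π(x, θ)` at `x = ∑ ζ_j x̄^j`, `θ = ∑ η_l θ̄^l` is the same nested convex combination
`∑_j ζ_j ∑_l η_l (A(θ̄^l) x̄^j + B u^{(j,l)})` of the vertex successors, so it lies in the convex
set `Y`; likewise `Π(x, θ)` is a nested convex combination of the vertex controls in `U`.
-/

open Finset Matrix

theorem AffineMap.map_sum_smul {k V₁ V₂ ι : Type*} [Ring k] [AddCommGroup V₁] [Module k V₁]
    [AddCommGroup V₂] [Module k V₂] (f : V₁ →ᵃ[k] V₂) (s : Finset ι) (w : ι → k) (p : ι → V₁)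
    (hw : ∑ i ∈ s, w i = 1) :
    f (∑ i ∈ s, w i • p i) = ∑ i ∈ s, w i • f (p i) := by
  rw [← s.affineCombination_eq_linear_combination p w hw, s.map_affineCombination p w hw,
    s.affineCombination_eq_linear_combination _ w hw]
  rfl

theorem Matrix.sum_smul_mulVec_sum_smul {m n ι κ α : Type*} [Fintype n] [CommSemiring α]
    (s : Finset ι) (η : ι → α) (M : ι → Matrix m n α) (t : Finset κ) (ζ : κ → α)
    (x : κ → n → α) :
    (∑ l ∈ s, η l • M l) *ᵥ (∑ j ∈ t, ζ j • x j) = ∑ j ∈ t, ζ j • ∑ l ∈ s, η l • M l *ᵥ x j := by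
  simp only [sum_mulVec, mulVec_sum, smul_mulVec, mulVec_smul, smul_sum]

theorem Convex.sum_smul_sum_smul_mem {E ι κ : Type*} [AddCommGroup E] [Module ℝ E] {S : Set E}
    (hS : Convex ℝ S) {s : Finset ι} {ζ : ι → ℝ} (hζ : ∀ j ∈ s, 0 ≤ ζ j)
    (hζ1 : ∑ j ∈ s, ζ j = 1) {t : Finset κ} {η : κ → ℝ} (hη : ∀ l ∈ t, 0 ≤ η l)
    (hη1 : ∑ l ∈ t, η l = 1) {f : ι → κ → E} (hf : ∀ j ∈ s, ∀ l ∈ t, f j l ∈ S) :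
    ∑ j ∈ s, ζ j • ∑ l ∈ t, η l • f j l ∈ S :=
  hS.sum_mem hζ hζ1 fun j hj => hS.sum_mem hη hη1 (hf j hj)

/-- vertex controls feasible at all vertex pairs interpolate, via the
bilinear vertex-control law, to a feasible control on all of X × Θ. -/
theorem vertex_controller_sufficiency {n m nθ t q : ℕ}
    (A0 : Matrix (Fin n) (Fin n) ℝ) (Ai : Fin nθ → Matrix (Fin n) (Fin n) ℝ)
    (A : (Fin nθ → ℝ) → Matrix (Fin n) (Fin n) ℝ)
    (hA : ∀ θ, A θ = A0 + ∑ i, θ i • Ai i)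
    (B : Matrix (Fin n) (Fin m) ℝ)
    (U : Set (Fin m → ℝ)) (hU : Convex ℝ U)
    (Y : Set (Fin n → ℝ)) (hY : Convex ℝ Y)
    (θv : Fin (q + 1) → (Fin nθ → ℝ)) (xv : Fin (t + 1) → (Fin n → ℝ))
    (u : Fin (t + 1) → Fin (q + 1) → (Fin m → ℝ))
    (huU : ∀ j l, u j l ∈ U)
    (huY : ∀ j l, (A (θv l)).mulVec (xv j) + B.mulVec (u j l) ∈ Y)
    (ζ : Fin (t + 1) → ℝ) (η : Fin (q + 1) → ℝ)
    (hζ : ∀ j, 0 ≤ ζ j) (hη : ∀ l, 0 ≤ η l)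
    (hζ1 : ∑ j, ζ j = 1) (hη1 : ∑ l, η l = 1) :
    (∑ j, ζ j • ∑ l, η l • u j l) ∈ U ∧
    (A (∑ l, η l • θv l)).mulVec (∑ j, ζ j • xv j) +
        B.mulVec (∑ j, ζ j • ∑ l, η l • u j l) ∈ Y := by
  have hA_affine : A = ⇑(AffineMap.const ℝ (Fin nθ → ℝ) A0 +
      (Fintype.linearCombination ℝ Ai).toAffineMap) := by
    funext θ
    simp [hA, Fintype.linearCombination_apply]
  have hA_comb : A (∑ l, η l • θv l) = ∑ l, η l • A (θv l) := by
    rw [hA_affine]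
    exact AffineMap.map_sum_smul _ _ η θv hη1
  have hsucc : (A (∑ l, η l • θv l)).mulVec (∑ j, ζ j • xv j) +
      B.mulVec (∑ j, ζ j • ∑ l, η l • u j l) =
        ∑ j, ζ j • ∑ l, η l • ((A (θv l)).mulVec (xv j) + B.mulVec (u j l)) := by
    rw [hA_comb, sum_smul_mulVec_sum_smul]
    simp only [mulVec_sum, mulVec_smul, smul_add, sum_add_distrib]
  exact ⟨hU.sum_smul_sum_smul_mem (fun j _ => hζ j) hζ1 (fun l _ => hη l) hη1
      fun j _ l _ => huU j l,
    hsucc ▸ hY.sum_smul_sum_smul_mem (fun j _ => hζ j) hζ1 (fun l _ => hη l) hη1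
      fun j _ l _ => huY j l⟩
end

section
/- Let S0, S1 ⊆ R^n be compact convex sets with 0 ∈ S1, and suppose G: R^n → Set(R^n) satisfies: (a) G(αx) = αG(x) for all α ≥ 0; (b) G(x) ⊆ S1 for all x ∈ ∂S0, where S0 is a PC-set. Then for every γ ∈ [0,1] and every x ∈ γS0, G(x) ⊆ γS1. -/
open Pointwise Topology

/-- scaled copies of an invariant set remain invariant under
positively homogeneous set-valued dynamics. -/
theorem scaled_invariance {n : ℕ} (S0 S1 : Set (Fin n → ℝ))
    (hS0 : IsPCSet S0) (hS1c : IsCompact S1) (hS1v : Convex ℝ S1)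
    (h0 : (0 : Fin n → ℝ) ∈ S1)
    (G : (Fin n → ℝ) → Set (Fin n → ℝ))
    (hhom : ∀ α : ℝ, 0 ≤ α → ∀ x : Fin n → ℝ, G (α • x) = α • G x)
    (hbd : ∀ x ∈ frontier S0, G x ⊆ S1) :
    ∀ γ : ℝ, 0 ≤ γ → γ ≤ 1 → ∀ x ∈ γ • S0, G x ⊆ γ • S1 := by
  obtain ⟨hS0c, hS0v, hS0i⟩ := hS0
  have hnhds : S0 ∈ 𝓝 (0 : Fin n → ℝ) := mem_interior_iff_mem_nhds.1 hS0i
  have habs : Absorbent ℝ S0 := absorbent_nhds_zero hnhds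
  have hbdd : Bornology.IsVonNBounded ℝ S0 :=
    NormedSpace.isVonNBounded_iff ℝ |>.2 hS0c.isBounded
  intro γ hγ0 hγ1 x hx y hy
  by_cases hx0 : x = 0
  · subst hx0
    have hG0 : G 0 = (0 : ℝ) • G 0 := by
      have := hhom 0 le_rfl 0
      rwa [zero_smul] at this
    rw [hG0] at hy
    obtain ⟨z, _, hz⟩ := hy
    rw [← hz]
    show (0:ℝ) • z ∈ γ • S1
    rw [zero_smul]
    exact ⟨0, h0, by simp⟩
  · set μ := gauge S0 x with hμ
    have hμγ : μ ≤ γ := gauge_le_of_mem hγ0 hx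
    have hμ0 : 0 < μ := (gauge_pos habs hbdd).2 hx0
    set xb := μ⁻¹ • x with hxb
    have hgxb : gauge S0 xb = 1 := by
      rw [hxb, gauge_smul_of_nonneg (inv_nonneg.2 hμ0.le), smul_eq_mul, ← hμ,
        inv_mul_cancel₀ hμ0.ne']
    have hfr : xb ∈ frontier S0 := (gauge_eq_one_iff_mem_frontier hS0v hnhds).1 hgxb
    have hxeq : x = μ • xb := by rw [hxb, smul_inv_smul₀ hμ0.ne']
    have hGx : G x = μ • G xb := by rw [hxeq, hhom μ hμ0.le]
    rw [hGx] at hy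
    obtain ⟨z, hz, hzy⟩ := hy
    have hzS1 : z ∈ S1 := hbd xb hfr hz
    have hγpos : 0 < γ := lt_of_lt_of_le hμ0 hμγ
    refine ⟨(γ⁻¹ * μ) • z, ?_, ?_⟩
    · exact hS1v.smul_mem_of_zero_mem h0 hzS1
        ⟨by positivity, by rw [inv_mul_le_iff₀ hγpos, mul_one]; exact hμγ⟩
    · show γ • ((γ⁻¹ * μ) • z) = y
      rw [← hzy, smul_smul]
      show (γ * (γ⁻¹ * μ)) • z = μ • z
      rw [← mul_assoc, mul_inv_cancel₀ hγpos.ne', one_mul]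
end
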